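/- arXiv:1304.7045 — 3 statements merged into one kernel-verified Lean document; each statement's English description precedes it below -/
import Mathlib

section
/- Let x_1,...,x_m ∈ ℝ^d and let v_1,...,v_k ∈ ℝ^m be vectors that span P_1. Then for every real multivariate polynomial p in d variables of total degree at most 2, the evaluation vector (p(x_1),...,p(x_m)) lies in the linear span of the set of Hadamard products {v_j ∘ v_r : 1 ≤ j, r ≤ k} together with the vectors {v_j : 1 ≤ j ≤ k}. -/
/-- The evaluation vector of a multivariate polynomial `p` in `d` variables
at the points `x 1, ..., x m`. -/
noncomputable def evalVec {d m : ℕ} (x : Fin m → Fin d → ℝ) (p : MvPolynomial (Fin d) ℝ) :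
    Fin m → ℝ :=
  fun j => MvPolynomial.eval (x j) p

/-- `evalSpan x t` is the linear subspace `P_t` of `ℝ^m` spanned by the evaluation vectors of
all polynomials of total degree at most `t`. -/
noncomputable def evalSpan {d m : ℕ} (x : Fin m → Fin d → ℝ) (t : ℕ) :
    Submodule ℝ (Fin m → ℝ) :=
  Submodule.span ℝ {v | ∃ p : MvPolynomial (Fin d) ℝ, p.totalDegree ≤ t ∧ v = evalVec x p}

/-- Hadamard products of elements of the span of `range v` lie in the span of
pairwise Hadamard products. -/
lemma hadamard_mem_span {k m : ℕ} (v : Fin k → Fin m → ℝ) {u w : Fin m → ℝ}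
    (hu : u ∈ Submodule.span ℝ (Set.range v))
    (hw : w ∈ Submodule.span ℝ (Set.range v)) :
    u * w ∈ Submodule.span ℝ {z | ∃ j r : Fin k, z = v j * v r} := by
  induction hu using Submodule.span_induction with
  | mem a ha =>
    obtain ⟨j, rfl⟩ := ha
    induction hw using Submodule.span_induction with
    | mem b hb =>
      obtain ⟨r, rfl⟩ := hb
      exact Submodule.subset_span ⟨j, r, rfl⟩
    | zero => simp
    | add b c _ _ hb hc => rw [mul_add]; exact Submodule.add_mem _ hb hc
    | smul c b _ hb => rw [mul_smul_comm]; exact Submodule.smul_mem _ _ hb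
  | zero => simp
  | add a b _ _ ha hb => rw [add_mul]; exact Submodule.add_mem _ ha hb
  | smul c a _ ha => rw [smul_mul_assoc]; exact Submodule.smul_mem _ _ ha

lemma degree_two_split {d : ℕ} (s : Fin d →₀ ℕ) (h : s.sum (fun _ e => e) = 2) :
    ∃ s₁ s₂ : Fin d →₀ ℕ, s = s₁ + s₂ ∧ s₁.sum (fun _ e => e) = 1 ∧
      s₂.sum (fun _ e => e) = 1 := by
  have hs0 : s ≠ 0 := by
    intro h0; rw [h0] at h; simp [Finsupp.sum] at h
  obtain ⟨i, hi⟩ := Finsupp.ne_iff.mp hs0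
  simp only [Finsupp.coe_zero, Pi.zero_apply] at hi
  have hi1 : 1 ≤ s i := Nat.one_le_iff_ne_zero.mpr hi
  refine ⟨Finsupp.single i 1, s - Finsupp.single i 1, ?_, ?_, ?_⟩
  · ext j
    by_cases hj : j = i
    · simp [hj, Finsupp.single_apply, Nat.add_sub_cancel' hi1]
    · simp [Finsupp.single_apply, Ne.symm hj]
  · simp [Finsupp.sum_single_index]
  · have hadd : (Finsupp.single i 1 + (s - Finsupp.single i 1)).sum (fun _ e => e) = 2 := by
      rw [← h]
      congr 1
      ext j
      by_cases hj : j = i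
      · simp [hj, Finsupp.single_apply, Nat.add_sub_cancel' hi1]
      · simp [Finsupp.single_apply, Ne.symm hj]
    rw [Finsupp.sum_add_index (by simp) (by intros; rfl)] at hadd
    simp [Finsupp.sum_single_index] at hadd
    omega

/-- if `v 1, ..., v k` span `P_1`, then the evaluation vector of any polynomial
of total degree at most 2 lies in the span of the Hadamard products `v j ∘ v r`
together with the vectors `v j`. -/
theorem statement_5 (d m k : ℕ) (hd : 0 < d) (hm : 0 < m)
    (x : Fin m → Fin d → ℝ) (v : Fin k → Fin m → ℝ)
    (hv : Submodule.span ℝ (Set.range v) = evalSpan x 1)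
    (p : MvPolynomial (Fin d) ℝ) (hp : p.totalDegree ≤ 2) :
    evalVec x p ∈
      Submodule.span ℝ ({w | ∃ j r : Fin k, w = v j * v r} ∪ Set.range v) := by
  classical
  set S := Submodule.span ℝ ({w | ∃ j r : Fin k, w = v j * v r} ∪ Set.range v) with hS
  -- span of range v is inside S
  have hvS : Submodule.span ℝ (Set.range v) ≤ S :=
    Submodule.span_mono Set.subset_union_right
  have hprodS : Submodule.span ℝ {z | ∃ j r : Fin k, z = v j * v r} ≤ S :=
    Submodule.span_mono Set.subset_union_left
  -- evaluation vectors of degree ≤ 1 polynomials are in span (range v)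
  have hdeg1 : ∀ q : MvPolynomial (Fin d) ℝ, q.totalDegree ≤ 1 →
      evalVec x q ∈ Submodule.span ℝ (Set.range v) := by
    intro q hq
    rw [hv]
    exact Submodule.subset_span ⟨q, hq, rfl⟩
  -- product rule for evalVec
  have hmul : ∀ q₁ q₂ : MvPolynomial (Fin d) ℝ,
      evalVec x (q₁ * q₂) = evalVec x q₁ * evalVec x q₂ := by
    intro q₁ q₂; funext j; simp [evalVec]
  -- decompose p into monomials
  have hsum : evalVec x p = ∑ s ∈ p.support,
      evalVec x (MvPolynomial.monomial s (MvPolynomial.coeff s p)) := by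
    funext j
    simp only [evalVec]
    conv_lhs => rw [p.as_sum]
    rw [map_sum]
    simp [evalVec, Finset.sum_apply]
  rw [hsum]
  apply Submodule.sum_mem
  intro s hs
  have hdeg : s.sum (fun _ e => e) ≤ 2 := le_trans (MvPolynomial.le_totalDegree hs) hp
  set c := MvPolynomial.coeff s p with hc
  rcases Nat.lt_or_ge (s.sum fun _ e => e) 2 with h2 | h2
  · -- degree ≤ 1 : in span range v ⊆ S
    apply hvS
    apply hdeg1
    exact le_trans (MvPolynomial.totalDegree_monomial_le s c) (Nat.lt_succ_iff.mp h2)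
  · -- degree = 2 : split
    have h2' : s.sum (fun _ e => e) = 2 := le_antisymm hdeg h2
    obtain ⟨s₁, s₂, hsplit, h1, h1'⟩ := degree_two_split s h2'
    have : (MvPolynomial.monomial s c : MvPolynomial (Fin d) ℝ) =
        MvPolynomial.monomial s₁ c * MvPolynomial.monomial s₂ 1 := by
      rw [MvPolynomial.monomial_mul, mul_one, hsplit]
    rw [this, hmul]
    apply hprodS
    apply hadamard_mem_span v
    · exact hdeg1 _ (le_trans (MvPolynomial.totalDegree_monomial_le s₁ c) h1.le)
    · exact hdeg1 _ (le_trans (MvPolynomial.totalDegree_monomial_le s₂ 1) h1'.le)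
end

section
/- Suppose x_1,...,x_m ∈ ℝ^d are distinct. If for some t ≥ 1 we have P_t = P_{t−1}, then P_{t−1} = ℝ^m. -/
namespace Statement8Aux

open MvPolynomial

variable {d m : ℕ}

lemma evalVec_mem (x : Fin m → Fin d → ℝ) {t : ℕ} {p : MvPolynomial (Fin d) ℝ}
    (hp : p.totalDegree ≤ t) : evalVec x p ∈ evalSpan x t :=
  Submodule.subset_span ⟨p, hp, rfl⟩

lemma evalSpan_mono (x : Fin m → Fin d → ℝ) {s s' : ℕ} (hs : s ≤ s') :
    evalSpan x s ≤ evalSpan x s' :=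
  Submodule.span_mono (fun _ ⟨p, hp, hv⟩ => ⟨p, hp.trans hs, hv⟩)

/-- `evalVec` as a linear map. -/
noncomputable def evalVecL (x : Fin m → Fin d → ℝ) :
    MvPolynomial (Fin d) ℝ →ₗ[ℝ] (Fin m → ℝ) where
  toFun := evalVec x
  map_add' p q := by funext j; simp [evalVec]
  map_smul' c p := by funext j; simp [evalVec]

/-- Pointwise multiplication by the `i`-th coordinate as a linear map. -/
noncomputable def mulMap (x : Fin m → Fin d → ℝ) (i : Fin d) :
    (Fin m → ℝ) →ₗ[ℝ] (Fin m → ℝ) where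
  toFun v := fun j => x j i * v j
  map_add' u v := by funext j; simp [mul_add]
  map_smul' c v := by funext j; simp; ring

lemma mulMap_evalVec (x : Fin m → Fin d → ℝ) (i : Fin d) (p : MvPolynomial (Fin d) ℝ) :
    mulMap x i (evalVec x p) = evalVec x (p * X i) := by
  funext j; simp [mulMap, evalVec, mul_comm]

lemma mulMap_span (x : Fin m → Fin d → ℝ) (i : Fin d) (s : ℕ) :
    Submodule.map (mulMap x i) (evalSpan x s) ≤ evalSpan x (s + 1) := by
  rw [evalSpan, Submodule.map_span, Submodule.span_le]
  rintro v ⟨w, ⟨p, hp, rfl⟩, rfl⟩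
  rw [mulMap_evalVec]
  apply Submodule.subset_span
  refine ⟨p * X i, ?_, rfl⟩
  calc (p * X i).totalDegree ≤ p.totalDegree + (X i : MvPolynomial (Fin d) ℝ).totalDegree :=
        totalDegree_mul _ _
    _ ≤ s + 1 := by rw [totalDegree_X]; omega

lemma stable (x : Fin m → Fin d → ℝ) (t : ℕ) (ht : 1 ≤ t)
    (h : evalSpan x t = evalSpan x (t - 1)) :
    ∀ k : ℕ, evalSpan x (t + k) = evalSpan x (t - 1) := by
  intro k
  induction k with
  | zero => simpa using h
  | succ k ih =>
    refine le_antisymm ?_ ((ih ▸ evalSpan_mono x (by omega) : evalSpan x (t-1) ≤ _))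
    rw [evalSpan, Submodule.span_le]
    rintro v ⟨p, hp, rfl⟩
    -- decompose p into monomials
    have hrep : evalVec x p = ∑ u ∈ p.support, evalVec x (monomial u (p.coeff u)) := by
      have := map_sum (evalVecL x) (fun u => monomial u (p.coeff u)) p.support
      simpa [evalVecL, ← p.as_sum] using this
    rw [hrep]
    refine Submodule.sum_mem _ (fun u hu => ?_)
    have hus : (u.sum fun _ e => e) ≤ t + (k + 1) := (le_totalDegree hu).trans hp
    by_cases hcase : (u.sum fun _ e => e) ≤ t + k
    · have hdeg : (monomial u (p.coeff u)).totalDegree ≤ t + k :=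
        (totalDegree_monomial_le _ _).trans hcase
      rw [← ih]
      exact evalVec_mem x hdeg
    · -- u has positive degree; peel off one variable
      have hune : u ≠ 0 := by
        rintro rfl
        simp at hcase
      obtain ⟨i, hi⟩ : ∃ i, u i ≠ 0 := by
        by_contra hc
        push_neg at hc
        exact hune (Finsupp.ext fun a => hc a)
      set u' := u - Finsupp.single i 1 with hu'
      have hle : Finsupp.single i 1 ≤ u := Finsupp.single_le_iff.2 (by omega)
      have hadd : u' + Finsupp.single i 1 = u := tsub_add_cancel_of_le hle
      have hsum : (u'.sum fun _ e => e) + 1 = u.sum fun _ e => e := by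
        conv_rhs => rw [← hadd]
        rw [Finsupp.sum_add_index' (fun _ => rfl) (fun _ _ _ => rfl)]
        simp
      have hmon : monomial u (p.coeff u) = monomial u' (p.coeff u) * X i := by
        rw [← hadd, monomial_add_single, pow_one]
      have hdeg' : (monomial u' (p.coeff u)).totalDegree ≤ t + k := by
        refine (totalDegree_monomial_le _ _).trans ?_
        have hid : (u'.sum fun _ => id) = u'.sum fun _ e => e := rfl
        rw [hid]; omega
      have hmem : evalVec x (monomial u' (p.coeff u)) ∈ evalSpan x (t - 1) := by
        rw [← ih]; exact evalVec_mem x hdeg'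
      have : mulMap x i (evalVec x (monomial u' (p.coeff u))) ∈ evalSpan x (t - 1 + 1) :=
        mulMap_span x i (t - 1) ⟨_, hmem, rfl⟩
      rw [mulMap_evalVec, ← hmon] at this
      have ht1 : t - 1 + 1 = t := by omega
      rw [ht1, h] at this
      exact this

end Statement8Aux

/-- for distinct points, if `P_t = P_{t-1}` for some `t ≥ 1`,
then `P_{t-1} = ℝ^m`. -/
theorem statement_8 (d m : ℕ) (hd : 0 < d) (hm : 0 < m)
    (x : Fin m → Fin d → ℝ) (hx : Function.Injective x) (t : ℕ) (ht : 1 ≤ t)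
    (h : evalSpan x t = evalSpan x (t - 1)) :
    evalSpan x (t - 1) = ⊤ := by
  classical
  open MvPolynomial in
  -- every evaluation vector belongs to `evalSpan x (t-1)`
  have hall : ∀ p : MvPolynomial (Fin d) ℝ, evalVec x p ∈ evalSpan x (t - 1) := by
    intro p
    have h1 : evalVec x p ∈ evalSpan x (t + p.totalDegree) :=
      Statement8Aux.evalVec_mem x (by omega)
    rwa [Statement8Aux.stable x t ht h p.totalDegree] at h1
  -- interpolation: each standard basis vector is an evaluation vector
  have hsingle : ∀ j : Fin m, (Pi.single j 1 : Fin m → ℝ) ∈ evalSpan x (t - 1) := by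
    intro j
    have hsep : ∀ k : Fin m, ∃ i : Fin d, k ≠ j → x j i ≠ x k i := by
      intro k
      by_cases hk : k = j
      · exact ⟨⟨0, hd⟩, fun hkj => absurd hk hkj⟩
      · obtain ⟨i, hi⟩ : ∃ i, x j i ≠ x k i := by
          by_contra hc
          push_neg at hc
          exact hk (hx (funext fun i => (hc i).symm))
        exact ⟨i, fun _ => hi⟩
    choose i hi using hsep
    set p : MvPolynomial (Fin d) ℝ :=
      ∏ k ∈ Finset.univ.erase j,
        (C (x j (i k) - x k (i k))⁻¹ * (X (i k) - C (x k (i k)))) with hp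
    have heval : evalVec x p = Pi.single j 1 := by
      funext l
      simp only [evalVec, hp, map_prod, map_mul, map_sub, eval_C, eval_X]
      by_cases hl : l = j
      · subst hl
        rw [Finset.prod_eq_one, Pi.single_eq_same]
        intro k hk
        have hne := hi k (Finset.mem_erase.1 hk).1
        exact inv_mul_cancel₀ (sub_ne_zero.2 hne)
      · rw [Finset.prod_eq_zero (Finset.mem_erase.2 ⟨hl, Finset.mem_univ l⟩),
          Pi.single_eq_of_ne hl]
        simp
    rw [← heval]
    exact hall p
  rw [eq_top_iff]
  intro v _
  have hv : v = ∑ l, (v l) • (Pi.single l 1 : Fin m → ℝ) := by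
    funext j
    rw [Finset.sum_apply]
    rw [Finset.sum_eq_single j]
    · simp
    · intro b _ hb
      simp [Pi.single_eq_of_ne (Ne.symm hb)]
    · intro hj; exact absurd (Finset.mem_univ j) hj
  rw [hv]
  exact Submodule.sum_mem _ fun l _ => Submodule.smul_mem _ _ (hsingle l)
end

section
/- Suppose x_1,...,x_m ∈ ℝ^d are distinct. Then for every y ∈ ℝ^m there exists a real multivariate polynomial p in d variables of total degree at most m−1 such that p(x_j) = y_j for all j = 1,...,m. -/
/-- for distinct points, every `y ∈ ℝ^m` is interpolated by a polynomial of
total degree at most `m - 1`. -/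
theorem statement_10 (d m : ℕ) (hd : 0 < d) (hm : 0 < m)
    (x : Fin m → Fin d → ℝ) (hx : Function.Injective x) (y : Fin m → ℝ) :
    ∃ p : MvPolynomial (Fin d) ℝ, p.totalDegree ≤ m - 1 ∧
      ∀ j : Fin m, MvPolynomial.eval (x j) p = y j := by
  classical
  have key : ∀ j k : Fin m, j ≠ k → ∃ i : Fin d, x j i ≠ x k i := fun j k hjk =>
    Function.ne_iff.mp (fun h => hjk (hx h))
  set ι : Fin m → Fin m → Fin d := fun j k =>
    if h : j ≠ k then (key j k h).choose else ⟨0, hd⟩ with hιdef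
  have hι : ∀ j k, j ≠ k → x j (ι j k) ≠ x k (ι j k) := by
    intro j k h
    simpa only [hιdef, dif_pos h] using (key j k h).choose_spec
  set L : Fin m → MvPolynomial (Fin d) ℝ := fun j =>
    ∏ k ∈ Finset.univ.erase j,
      MvPolynomial.C ((x j (ι j k) - x k (ι j k))⁻¹) *
        (MvPolynomial.X (ι j k) - MvPolynomial.C (x k (ι j k))) with hLdef
  refine ⟨∑ j, MvPolynomial.C (y j) * L j, ?_, ?_⟩
  · refine MvPolynomial.totalDegree_finsetSum_le fun j _ => ?_
    calc (MvPolynomial.C (y j) * L j).totalDegree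
        ≤ (MvPolynomial.C (y j)).totalDegree + (L j).totalDegree :=
          MvPolynomial.totalDegree_mul _ _
      _ = (L j).totalDegree := by rw [MvPolynomial.totalDegree_C, zero_add]
      _ ≤ ∑ k ∈ Finset.univ.erase j, 1 := by
          refine (MvPolynomial.totalDegree_finset_prod _ _).trans ?_
          refine Finset.sum_le_sum fun k _ => ?_
          calc (MvPolynomial.C ((x j (ι j k) - x k (ι j k))⁻¹) *
                (MvPolynomial.X (ι j k) - MvPolynomial.C (x k (ι j k)))).totalDegree
              ≤ 0 + (MvPolynomial.X (ι j k) - MvPolynomial.C (x k (ι j k))).totalDegree := by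
                refine (MvPolynomial.totalDegree_mul _ _).trans ?_
                gcongr
                · exact le_of_eq (MvPolynomial.totalDegree_C _)
            _ ≤ 1 := by
                rw [zero_add]
                refine (MvPolynomial.totalDegree_sub _ _).trans ?_
                simp [MvPolynomial.totalDegree_X]
      _ = m - 1 := by
          rw [Finset.sum_const, smul_eq_mul, mul_one, Finset.card_erase_of_mem (Finset.mem_univ j),
            Finset.card_univ, Fintype.card_fin]
  · intro j'
    have hLeval : ∀ j, MvPolynomial.eval (x j') (L j) = if j = j' then 1 else 0 := by
      intro j
      by_cases hjj : j = j'
      · subst hjj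
        rw [if_pos rfl]
        simp only [hLdef, map_prod]
        refine Finset.prod_eq_one fun k hk => ?_
        have hk' : j ≠ k := (Finset.ne_of_mem_erase hk).symm
        simp only [map_mul, map_sub, MvPolynomial.eval_C, MvPolynomial.eval_X]
        exact inv_mul_cancel₀ (sub_ne_zero.mpr (hι j k hk'))
      · rw [if_neg hjj]
        simp only [hLdef, map_prod]
        refine Finset.prod_eq_zero (Finset.mem_erase.mpr ⟨fun h => hjj h.symm, Finset.mem_univ _⟩) ?_
        simp [map_mul, map_sub, MvPolynomial.eval_C, MvPolynomial.eval_X]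
    simp only [map_sum, map_mul, MvPolynomial.eval_C, hLeval]
    simp [Finset.sum_ite_eq]
end
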